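/- Let G be a Lie group with a left invariant Riemannian metric and Riemannian distance d. Then for all a, b, g in G, d(a,b) ≤ R(g^{-1}) · d(ag, bg), where R(h) = ‖(dR_h)_e‖. -/

import Mathlib

/- STATEMENT 3: Let `G` be a Lie group with a left invariant Riemannian metric (determined by an
inner product on the Lie algebra `E = T₁G`) and Riemannian distance `d` (the infimum of lengths
of smooth paths, lengths being measured with the left invariant metric).  Then for all
`a, b, g ∈ G`, `d(a,b) ≤ R(g⁻¹) · d(ag, bg)`, where `R(h) = ‖(dR_h)_1‖` is the metric operator
norm of the differential at the identity of right translation by `h`, i.e. the operator norm of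
`d(L_{h⁻¹})_h ∘ (dR_h)_1 : E → E`. -/

open scoped Manifold

/-- Length of a path in `G`, measured with the left invariant metric: the norm of the velocity
left-translated to the identity. -/
noncomputable def leftInvPathLength {E : Type*} [NormedAddCommGroup E] [InnerProductSpace ℝ E]
    {G : Type*} [TopologicalSpace G] [ChartedSpace E G] [Group G] [LieGroup 𝓘(ℝ, E) (⊤ : ℕ∞) G]
    (c : ℝ → G) : ℝ :=
  ∫ t in (0:ℝ)..1,
    ‖(show E from mfderiv 𝓘(ℝ, E) 𝓘(ℝ, E) (fun y => (c t)⁻¹ * y) (c t)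
        (mfderiv 𝓘(ℝ, ℝ) 𝓘(ℝ, E) c t (show TangentSpace 𝓘(ℝ, ℝ) t from (1 : ℝ))))‖

/-- The Riemannian distance of the left invariant metric: infimum of lengths of smooth paths. -/
noncomputable def leftInvDist {E : Type*} [NormedAddCommGroup E] [InnerProductSpace ℝ E]
    {G : Type*} [TopologicalSpace G] [ChartedSpace E G] [Group G] [LieGroup 𝓘(ℝ, E) (⊤ : ℕ∞) G]
    (a b : G) : ℝ :=
  sInf {L | ∃ c : ℝ → G, ContMDiff 𝓘(ℝ, ℝ) 𝓘(ℝ, E) 1 c ∧ c 0 = a ∧ c 1 = b ∧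
    L = leftInvPathLength (E := E) c}

/-- `R(g) = ‖(dR_g)_1‖`, the metric operator norm of the differential of right translation. -/
noncomputable def rightTransNorm {E : Type*} [NormedAddCommGroup E] [InnerProductSpace ℝ E]
    {G : Type*} [TopologicalSpace G] [ChartedSpace E G] [Group G] [LieGroup 𝓘(ℝ, E) (⊤ : ℕ∞) G]
    (g : G) : ℝ :=
  ‖(show E →L[ℝ] E from (mfderiv 𝓘(ℝ, E) 𝓘(ℝ, E) (fun y => g⁻¹ * y) g).comp
      (mfderiv 𝓘(ℝ, E) 𝓘(ℝ, E) (fun y => y * g) 1))‖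

/-! Right translation by `h` sends smooth paths from `a` to `b` to smooth paths from `a h` to `b h`.
Since `(c(s) h)⁻¹ (c(u) h) = h⁻¹ (c(s)⁻¹ c(u)) h`, the left-translated velocity of `t ↦ c(t) h` is
`Ad_{h⁻¹}` applied to that of `c`, and `‖Ad_{h⁻¹}‖ = R(h)`; so lengths grow by at most the factor
`R(h)`, and taking infima with `h = g⁻¹` gives the inequality. The left-translated velocity is
continuous (hence integrable) because it is a derivative of `(s, u) ↦ c(s)⁻¹ c(u)`, a `C¹` map
equal to `1` on the diagonal, which can be read in the single chart at `1`. -/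

section Calculus

variable {F : Type*} [NormedAddCommGroup F] [NormedSpace ℝ F]
  {E : Type*} [NormedAddCommGroup E] [NormedSpace ℝ E]
  {M : Type*} [TopologicalSpace M] [ChartedSpace E M]

/-- Along `γ` the derivative of `f` is computed in the single chart at `y`. -/
theorem continuous_mfderiv_of_forall_eq {f : F → M} (hf : ContMDiff 𝓘(ℝ, F) 𝓘(ℝ, E) 1 f)
    {γ : ℝ → F} (hγ : Continuous γ) {y : M} (hy : ∀ t, f (γ t) = y) :
    Continuous fun t => (show F →L[ℝ] E from mfderiv 𝓘(ℝ, F) 𝓘(ℝ, E) f (γ t)) := by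
  have hchart : ∀ x, ContDiffAt ℝ 1 (extChartAt 𝓘(ℝ, E) (f x) ∘ f) x := fun x => by
    simpa [chartAt_self_eq, contDiffWithinAt_univ, Function.comp_def]
      using (contMDiffAt_iff.mp (hf x)).2
  have hderiv : ∀ t, (show F →L[ℝ] E from mfderiv 𝓘(ℝ, F) 𝓘(ℝ, E) f (γ t)) =
      fderiv ℝ (extChartAt 𝓘(ℝ, E) y ∘ f) (γ t) := fun t => by
    rw [(hf.mdifferentiableAt one_ne_zero).mfderiv, ← hy t]
    simp [writtenInExtChartAt, chartAt_self_eq, Function.comp_def]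
  simp_rw [hderiv, continuous_iff_continuousAt]
  intro t
  have := ((hy t ▸ hchart (γ t)).fderiv_right (m := 0) le_rfl).continuousAt
  exact this.comp hγ.continuousAt

end Calculus

section LieGroup

variable {E : Type*} [NormedAddCommGroup E] [NormedSpace ℝ E]
  {G : Type*} [TopologicalSpace G] [ChartedSpace E G] [Group G] [LieGroup 𝓘(ℝ, E) (⊤ : ℕ∞) G]

variable (E) in
noncomputable def leftVelocity (c : ℝ → G) (t : ℝ) : E :=
  mfderiv 𝓘(ℝ, E) 𝓘(ℝ, E) (fun y => (c t)⁻¹ * y) (c t) (mfderiv 𝓘(ℝ, ℝ) 𝓘(ℝ, E) c t (1 : ℝ))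

variable (E) in
noncomputable def lieAdjoint (h : G) : E →L[ℝ] E :=
  mfderiv 𝓘(ℝ, E) 𝓘(ℝ, E) (fun z => h * z * h⁻¹) 1

theorem ContMDiff.inv_fst_mul_snd {c : ℝ → G} (hc : ContMDiff 𝓘(ℝ, ℝ) 𝓘(ℝ, E) 1 c) :
    ContMDiff 𝓘(ℝ, ℝ × ℝ) 𝓘(ℝ, E) 1 fun p : ℝ × ℝ => (c p.1)⁻¹ * c p.2 :=
  (hc.comp contDiff_fst.contMDiff).inv.mul (hc.comp contDiff_snd.contMDiff)

theorem leftVelocity_eq_mfderiv_inv_mul {c : ℝ → G} (hc : ContMDiff 𝓘(ℝ, ℝ) 𝓘(ℝ, E) 1 c)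
    (t : ℝ) :
    leftVelocity E c t = (show ℝ × ℝ →L[ℝ] E from
      mfderiv 𝓘(ℝ, ℝ × ℝ) 𝓘(ℝ, E) (fun p : ℝ × ℝ => (c p.1)⁻¹ * c p.2) (t, t)) (0, 1) := by
  have hslice : HasFDerivAt (Prod.mk t) ((0 : ℝ →L[ℝ] ℝ).prod (.id ℝ ℝ)) t :=
    (hasFDerivAt_const t t).prodMk (hasFDerivAt_id t)
  calc leftVelocity E c t
      = (show ℝ →L[ℝ] E from
          mfderiv 𝓘(ℝ, ℝ) 𝓘(ℝ, E) ((fun y => (c t)⁻¹ * y) ∘ c) t) 1 :=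
        (mfderiv_comp_apply t mdifferentiableAt_mul_left (hc.mdifferentiableAt one_ne_zero) _).symm
    _ = (show ℝ × ℝ →L[ℝ] E from
          mfderiv 𝓘(ℝ, ℝ × ℝ) 𝓘(ℝ, E) (fun p : ℝ × ℝ => (c p.1)⁻¹ * c p.2) (t, t))
          ((show ℝ →L[ℝ] ℝ × ℝ from mfderiv 𝓘(ℝ, ℝ) 𝓘(ℝ, ℝ × ℝ) (Prod.mk t) t) 1) :=
        mfderiv_comp_apply t ((hc.inv_fst_mul_snd (t, t)).mdifferentiableAt one_ne_zero)
          hslice.differentiableAt.mdifferentiableAt _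
    _ = _ := by
        rw [mfderiv_eq_fderiv, hslice.fderiv]
        rfl

theorem continuous_leftVelocity {c : ℝ → G} (hc : ContMDiff 𝓘(ℝ, ℝ) 𝓘(ℝ, E) 1 c) :
    Continuous (leftVelocity E c) := by
  have hderiv := continuous_mfderiv_of_forall_eq (E := E) hc.inv_fst_mul_snd
    (continuous_id.prodMk continuous_id) (fun t => inv_mul_cancel (c t))
  rw [funext (leftVelocity_eq_mfderiv_inv_mul hc)]
  exact (ContinuousLinearMap.apply ℝ E ((0 : ℝ), (1 : ℝ))).continuous.comp hderiv

theorem lieAdjoint_inv_eq_comp (h : G) :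
    lieAdjoint E h⁻¹ = (show E →L[ℝ] E from (mfderiv 𝓘(ℝ, E) 𝓘(ℝ, E) (fun y => h⁻¹ * y) h).comp
      (mfderiv 𝓘(ℝ, E) 𝓘(ℝ, E) (fun y => y * h) 1)) := by
  rw [lieAdjoint, show (fun z => h⁻¹ * z * h⁻¹⁻¹) = (fun y => h⁻¹ * y) ∘ fun y => y * h by
    funext z; simp [mul_assoc],
    mfderiv_comp 1 (mdifferentiableAt_mul_left (I := 𝓘(ℝ, E))) mdifferentiableAt_mul_right,
    one_mul]
  rfl

theorem leftVelocity_mul_const {c : ℝ → G} (hc : ContMDiff 𝓘(ℝ, ℝ) 𝓘(ℝ, E) 1 c) (h : G)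
    (t : ℝ) :
    leftVelocity E (fun s => c s * h) t = lieAdjoint E h⁻¹ (leftVelocity E c t) := by
  have hconj : (fun p : ℝ × ℝ => (c p.1 * h)⁻¹ * (c p.2 * h)) =
      (fun z => h⁻¹ * z * h⁻¹⁻¹) ∘ fun p : ℝ × ℝ => (c p.1)⁻¹ * c p.2 := by
    funext p; simp [mul_assoc]
  have hAd : MDifferentiableAt 𝓘(ℝ, E) 𝓘(ℝ, E) (fun z => h⁻¹ * z * h⁻¹⁻¹) 1 :=
    MDifferentiableAt.comp (I' := 𝓘(ℝ, E)) 1 mdifferentiableAt_mul_right mdifferentiableAt_mul_left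
  have hΘ := (hc.inv_fst_mul_snd (t, t)).mdifferentiableAt one_ne_zero
  calc leftVelocity E (fun s => c s * h) t
      = (show ℝ × ℝ →L[ℝ] E from mfderiv 𝓘(ℝ, ℝ × ℝ) 𝓘(ℝ, E)
          (fun p : ℝ × ℝ => (c p.1 * h)⁻¹ * (c p.2 * h)) (t, t)) (0, 1) :=
        leftVelocity_eq_mfderiv_inv_mul (hc.mul contMDiff_const) t
    _ = (show ℝ × ℝ →L[ℝ] E from mfderiv 𝓘(ℝ, ℝ × ℝ) 𝓘(ℝ, E)
          ((fun z => h⁻¹ * z * h⁻¹⁻¹) ∘ fun p : ℝ × ℝ => (c p.1)⁻¹ * c p.2) (t, t)) (0, 1) := by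
        rw [hconj]
    _ = lieAdjoint E h⁻¹ (leftVelocity E c t) := by
        rw [leftVelocity_eq_mfderiv_inv_mul hc]
        exact mfderiv_comp_apply_of_eq (t, t) hAd hΘ (inv_mul_cancel (c t)) _

end LieGroup

theorem Real.sInf_le_mul_sInf_of_forall_exists {S T : Set ℝ} {K : ℝ} (hK : 0 ≤ K)
    (hS : ∀ x ∈ S, 0 ≤ x) (hST : S.Nonempty → T.Nonempty) (h : ∀ y ∈ T, ∃ x ∈ S, x ≤ K * y) :
    sInf S ≤ K * sInf T := by
  rcases T.eq_empty_or_nonempty with rfl | hT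
  · have hS_empty : S = ∅ := Set.not_nonempty_iff_eq_empty.mp fun hS => (hST hS).ne_empty rfl
    simp [hS_empty]
  rw [← smul_eq_mul, ← Real.sInf_smul_of_nonneg hK]
  refine le_csInf (hT.smul_set) ?_
  rintro _ ⟨y, hy, rfl⟩
  obtain ⟨x, hx, hxy⟩ := h y hy
  exact (csInf_le ⟨0, hS⟩ hx).trans hxy

section PathLength

variable {E : Type*} [NormedAddCommGroup E] [InnerProductSpace ℝ E]
  {G : Type*} [TopologicalSpace G] [ChartedSpace E G] [Group G] [LieGroup 𝓘(ℝ, E) (⊤ : ℕ∞) G]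

theorem leftInvPathLength_nonneg (c : ℝ → G) : 0 ≤ leftInvPathLength (E := E) c :=
  intervalIntegral.integral_nonneg zero_le_one fun _ _ => norm_nonneg _

theorem rightTransNorm_eq_norm_lieAdjoint_inv (h : G) :
    rightTransNorm (E := E) h = ‖lieAdjoint E h⁻¹‖ := by
  rw [lieAdjoint_inv_eq_comp]
  rfl

theorem leftInvPathLength_mul_const_le {c : ℝ → G} (hc : ContMDiff 𝓘(ℝ, ℝ) 𝓘(ℝ, E) 1 c)
    (h : G) :
    leftInvPathLength (E := E) (fun t => c t * h) ≤
      rightTransNorm (E := E) h * leftInvPathLength (E := E) c := by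
  rw [rightTransNorm_eq_norm_lieAdjoint_inv, leftInvPathLength, leftInvPathLength,
    ← intervalIntegral.integral_const_mul]
  refine intervalIntegral.integral_mono_on zero_le_one
    ((continuous_leftVelocity (hc.mul contMDiff_const)).norm.intervalIntegrable 0 1)
    ((continuous_const.mul (continuous_leftVelocity hc).norm).intervalIntegrable 0 1)
    fun t _ => ?_
  change ‖leftVelocity E (fun s => c s * h) t‖ ≤ ‖lieAdjoint E h⁻¹‖ * ‖leftVelocity E c t‖
  rw [leftVelocity_mul_const hc h t]
  exact (lieAdjoint E h⁻¹).le_opNorm _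

end PathLength

theorem dist_le_rightTransNorm_inv_mul {E : Type*} [NormedAddCommGroup E] [InnerProductSpace ℝ E]
    {G : Type*} [TopologicalSpace G] [ChartedSpace E G] [Group G] [LieGroup 𝓘(ℝ, E) (⊤ : ℕ∞) G]
    (a b g : G) :
    leftInvDist (E := E) a b ≤
      rightTransNorm (E := E) g⁻¹ * leftInvDist (E := E) (a * g) (b * g) := by
  refine Real.sInf_le_mul_sInf_of_forall_exists (norm_nonneg _) ?_ ?_ ?_
  · rintro _ ⟨c, -, -, -, rfl⟩
    exact leftInvPathLength_nonneg c
  · rintro ⟨_, c, hc, hc0, hc1, rfl⟩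
    exact ⟨_, fun t => c t * g, hc.mul contMDiff_const, by simp [hc0], by simp [hc1], rfl⟩
  · rintro _ ⟨c, hc, hc0, hc1, rfl⟩
    exact ⟨_, ⟨fun t => c t * g⁻¹, hc.mul contMDiff_const, by simp [hc0], by simp [hc1], rfl⟩,
      leftInvPathLength_mul_const_le hc g⁻¹⟩
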